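/- arXiv:1106.0742 — 5 statements merged into one kernel-verified Lean document; each statement's English description precedes it below -/
import Mathlib

section
/- Let $R$ be a commutative ring and let $X = (x_{ij})$ and $Y = (y_{ij})$ be two $n \times n$ matrices over $R$. Then $\det(Y) = \det(X) + \sum_{i=1}^{n}\sum_{j=1}^{n} (-1)^{i+j} \det(M_{ij}) \cdot (y_{ij} - x_{ij})$, where $M_{ij}$ is the $(n-1)\times(n-1)$ matrix obtained by deleting column $j$ and whose rows $1,\dots,i-1$ are the corresponding rows of $Y$ and whose rows $i+1,\dots,n$ are the corresponding rows of $X$ (i.e., $M_{ij}$ has rows $Y_{1},\dots,Y_{i-1},X_{i+1},\dots,X_n$ each with the $j$-th entry removed). -/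
/-- Lemma 2.3: for `n×n` matrices `X`, `Y` over a commutative ring,
`det Y = det X + ∑ᵢⱼ (-1)^{i+j} det(M_{ij}) (y_{ij} - x_{ij})`, where `M_{ij}`
is obtained by deleting row `i` and column `j`, taking rows above `i` from `Y`
and rows below `i` from `X`. -/
theorem stmt_0 {R : Type*} [CommRing R] (n : ℕ)
    (X Y : Matrix (Fin (n + 1)) (Fin (n + 1)) R) :
    Y.det = X.det +
      ∑ i : Fin (n + 1), ∑ j : Fin (n + 1),
        (-1 : R) ^ (i.val + j.val) *
          (Matrix.of fun p q : Fin n =>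
            if i.succAbove p < i then Y (i.succAbove p) (j.succAbove q)
            else X (i.succAbove p) (j.succAbove q)).det *
          (Y i j - X i j) := by
  set A : ℕ → Matrix (Fin (n + 1)) (Fin (n + 1)) R :=
    fun k => Matrix.of fun p q => if (p : ℕ) < k then Y p q else X p q with hA
  have h0 : A 0 = X := by ext p q; simp [hA]
  have hn : A (n + 1) = Y := by
    ext p q; simp [hA, p.isLt]
  have key : ∀ i : Fin (n + 1),
      (A (i + 1)).det - (A i).det =
      ∑ j : Fin (n + 1),
        (-1 : R) ^ (i.val + j.val) *
          (Matrix.of fun p q : Fin n =>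
            if i.succAbove p < i then Y (i.succAbove p) (j.succAbove q)
            else X (i.succAbove p) (j.succAbove q)).det *
          (Y i j - X i j) := by
    intro i
    have h1 : A (i + 1) = (A i).updateRow i (Y i) := by
      ext p q
      rcases eq_or_ne p i with rfl | hp
      · simp [hA, Matrix.updateRow_self]
      · rw [Matrix.updateRow_ne hp]
        simp only [hA, Matrix.of_apply]
        have : ((p : ℕ) < (i : ℕ) + 1) ↔ ((p : ℕ) < (i : ℕ)) := by
          rw [Nat.lt_succ_iff, lt_iff_le_and_ne]
          simp [Fin.val_ne_of_ne hp]
        simp only [this]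
    have h2 : A i = (A i).updateRow i (X i) := by
      ext p q
      rcases eq_or_ne p i with rfl | hp
      · simp [hA, Matrix.updateRow_self]
      · rw [Matrix.updateRow_ne hp]
    have h3 : (A (i+1)).det - (A i).det = ((A i).updateRow i (Y i - X i)).det := by
      have hadd := Matrix.det_updateRow_add (A i) i (Y i - X i) (X i)
      rw [sub_add_cancel] at hadd
      rw [h1]
      nth_rewrite 2 [h2]
      rw [hadd]; ring
    rw [h3, Matrix.det_succ_row _ i]
    refine Finset.sum_congr rfl fun j _ => ?_
    have hsub : ∀ p q,
        ((A i).updateRow i (Y i - X i)).submatrix i.succAbove j.succAbove p q =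
        (Matrix.of fun p q : Fin n =>
            if i.succAbove p < i then Y (i.succAbove p) (j.succAbove q)
            else X (i.succAbove p) (j.succAbove q)) p q := by
      intro p q
      simp only [Matrix.submatrix_apply, Matrix.of_apply]
      rw [Matrix.updateRow_ne (Fin.succAbove_ne i p)]
      simp only [hA, Matrix.of_apply]
      rfl
    have : ((A i).updateRow i (Y i - X i)).submatrix i.succAbove j.succAbove =
        (Matrix.of fun p q : Fin n =>
            if i.succAbove p < i then Y (i.succAbove p) (j.succAbove q)
            else X (i.succAbove p) (j.succAbove q)) := by
      ext p q; exact hsub p q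
    rw [this]
    simp [Matrix.updateRow_self]
    ring
  calc Y.det = (A 0).det + ∑ k ∈ Finset.range (n + 1), ((A (k + 1)).det - (A k).det) := by
        rw [Finset.sum_range_sub (fun k => (A k).det)]
        rw [hn]; ring
    _ = _ := by
        rw [h0]
        congr 1
        rw [← Fin.sum_univ_eq_sum_range]
        exact Finset.sum_congr rfl fun i _ => key i
end

section
/- Let $R$ be a commutative ring, $X$ and $Y$ be $n \times n$ matrices over $R$, and fix $1 \le i \le n$ and $0 \le j \le n$. Let $A$ be the $n \times n$ matrix whose rows $1,\dots,i-1$ are rows of $Y$, whose row $i$ has entries $y_{i1},\dots,y_{ij},x_{i,j+1},\dots,x_{in}$, and whose rows $i+1,\dots,n$ are rows of $X$. Then $\det(A) = \det(Y) + \sum_{k=j+1}^{n} (-1)^{i+k} \det(B_{ik})(x_{ik}-y_{ik}) + \sum_{l=i+1}^{n}\sum_{k=1}^{n} (-1)^{l+k}\det(B_{lk})(x_{lk}-y_{lk})$, where $B_{lk}$ is the $(n-1)\times(n-1)$ matrix with column $k$ deleted, whose rows $1,\dots,l-1$ come from $Y$ and rows $l+1,\dots,n$ come from $X$. -/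
open Matrix Finset

namespace Stmt1Aux

variable {R : Type*} [CommRing R]

/-- cofactor lemma -/
lemma det_updateRow_single {n : ℕ} (M : Matrix (Fin (n+1)) (Fin (n+1)) R)
    (l k : Fin (n+1)) (c : R) :
    (M.updateRow l (Pi.single k c)).det
      = (-1 : R) ^ (l.val + k.val) * c * (M.submatrix l.succAbove k.succAbove).det := by
  rw [det_succ_row _ l]
  have hsub : ∀ q : Fin (n+1),
      (M.updateRow l (Pi.single k c)).submatrix l.succAbove q.succAbove
        = M.submatrix l.succAbove q.succAbove := by
    intro q
    ext p r
    simp [Matrix.submatrix_apply, Matrix.updateRow_ne (Fin.succAbove_ne l p)]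
  rw [Finset.sum_eq_single k]
  · rw [hsub, Matrix.updateRow_self, Pi.single_eq_same]
  · intro b _ hb
    rw [Matrix.updateRow_self, Pi.single_eq_of_ne hb]
    ring
  · intro h; exact absurd (Finset.mem_univ k) h

variable {n : ℕ} (X Y : Matrix (Fin (n+1)) (Fin (n+1)) R)

/-- interpolating matrix: entry is `Y` iff its linear position is `< m`. -/
def D (m : ℕ) : Matrix (Fin (n+1)) (Fin (n+1)) R :=
  Matrix.of fun p q => if p.val * (n+1) + q.val < m then Y p q else X p q

def Bmat (l k : Fin (n+1)) : Matrix (Fin n) (Fin n) R :=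
  Matrix.of fun p q => if l.succAbove p < l then Y (l.succAbove p) (k.succAbove q)
    else X (l.succAbove p) (k.succAbove q)

def T (l k : Fin (n+1)) : R :=
  (-1 : R) ^ (l.val + k.val) * (Bmat X Y l k).det * (X l k - Y l k)

lemma pos_lt {p i : Fin (n+1)} (h : p < i) (q : Fin (n+1)) (j : ℕ) :
    p.val * (n+1) + q.val < i.val * (n+1) + j := by
  have h1 : (p.val + 1) * (n+1) ≤ i.val * (n+1) :=
    Nat.mul_le_mul_right _ h
  have h2 : q.val < n + 1 := q.isLt
  have h3 : (p.val + 1) * (n+1) = p.val * (n+1) + (n+1) := by ring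
  omega

lemma pos_ge {p i : Fin (n+1)} (h : i < p) (q : Fin (n+1)) {j : ℕ} (hj : j ≤ n+1) :
    i.val * (n+1) + j ≤ p.val * (n+1) + q.val := by
  have h1 : (i.val + 1) * (n+1) ≤ p.val * (n+1) :=
    Nat.mul_le_mul_right _ h
  have h3 : (i.val + 1) * (n+1) = i.val * (n+1) + (n+1) := by ring
  omega

lemma pos_eq_iff {l k l' k' : Fin (n+1)} :
    l.val * (n+1) + k.val = l'.val * (n+1) + k'.val ↔ l = l' ∧ k = k' := by
  constructor
  · intro h
    rcases lt_trichotomy l l' with hl | hl | hl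
    · exact absurd h (Nat.ne_of_lt (pos_lt hl _ _))
    · refine ⟨hl, ?_⟩
      subst hl
      have := Fin.val_injective (Nat.add_left_cancel h)
      omega
    · exact absurd h.symm (Nat.ne_of_lt (pos_lt hl _ _))
  · rintro ⟨rfl, rfl⟩; rfl

lemma key (d : ℕ) : ∀ m, m + d = (n+1) * (n+1) →
    (D X Y m).det = Y.det + ∑ l : Fin (n+1), ∑ k : Fin (n+1),
      (if m ≤ l.val * (n+1) + k.val then T X Y l k else 0) := by
  induction d with
  | zero =>
    intro m hm
    have hD : (D X Y m : Matrix _ _ R) = Y := by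
      ext p q
      have h1 : p.val * (n+1) + q.val < m := by
        have h2 : (p.val + 1) * (n+1) ≤ (n+1) * (n+1) :=
          Nat.mul_le_mul_right _ p.isLt
        have h3 : (p.val + 1) * (n+1) = p.val * (n+1) + (n+1) := by ring
        have := q.isLt
        omega
      simp [D, h1]
    have hS : ∀ l k : Fin (n+1), (if m ≤ l.val * (n+1) + k.val then T X Y l k else 0) = 0 := by
      intro l k
      have h1 : l.val * (n+1) + k.val < m := by
        have h2 : (l.val + 1) * (n+1) ≤ (n+1) * (n+1) :=
          Nat.mul_le_mul_right _ l.isLt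
        have h3 : (l.val + 1) * (n+1) = l.val * (n+1) + (n+1) := by ring
        have := k.isLt
        omega
      rw [if_neg (by omega)]
    simp only [hD, hS, Finset.sum_const_zero, add_zero]
  | succ d ih =>
    intro m hm
    have hmlt : m < (n+1) * (n+1) := by omega
    obtain ⟨l₀, k₀, hpos⟩ : ∃ l k : Fin (n+1), l.val * (n+1) + k.val = m :=
      ⟨⟨m / (n+1), Nat.div_lt_of_lt_mul hmlt⟩, ⟨m % (n+1), Nat.mod_lt _ (Nat.succ_pos n)⟩,
        by simpa [Nat.mul_comm] using Nat.div_add_mod m (n+1)⟩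
    have hrow : ∀ p : Fin (n+1), p ≠ l₀ → ∀ q, (D X Y m : Matrix _ _ R) p q = D X Y (m+1) p q := by
      intro p hp q
      have hne : p.val * (n+1) + q.val ≠ m := by
        intro h
        rw [← hpos] at h
        exact hp (pos_eq_iff.mp h).1
      simp only [D, Matrix.of_apply]
      rcases Nat.lt_or_ge (p.val * (n+1) + q.val) m with h | h
      · rw [if_pos h, if_pos (by omega)]
      · rw [if_neg (by omega), if_neg (by omega)]
    have hupd : (D X Y m : Matrix _ _ R)
        = (D X Y (m+1)).updateRow l₀ ((D X Y (m+1)) l₀ + Pi.single k₀ (X l₀ k₀ - Y l₀ k₀)) := by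
      ext p q
      rcases eq_or_ne p l₀ with rfl | hp
      · rw [Matrix.updateRow_self]
        rcases eq_or_ne q k₀ with rfl | hq
        · simp only [D, Matrix.of_apply, Pi.add_apply, Pi.single_eq_same]
          rw [if_neg (by omega), if_pos (by omega)]
          ring
        · have hne : p.val * (n+1) + q.val ≠ m := by
            intro h; rw [← hpos] at h; exact hq (pos_eq_iff.mp h).2
          simp only [D, Matrix.of_apply, Pi.add_apply, Pi.single_eq_of_ne hq, add_zero]
          rcases Nat.lt_or_ge (p.val * (n+1) + q.val) m with h | h
          · rw [if_pos h, if_pos (by omega)]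
          · rw [if_neg (by omega), if_neg (by omega)]
      · rw [Matrix.updateRow_ne hp]
        exact hrow p hp q
    have hBsub : (D X Y (m+1) : Matrix _ _ R).submatrix l₀.succAbove k₀.succAbove
        = Bmat X Y l₀ k₀ := by
      ext p q
      simp only [Matrix.submatrix_apply, D, Bmat, Matrix.of_apply]
      rcases lt_or_ge (l₀.succAbove p) l₀ with h | h
      · rw [if_pos h, if_pos ?_]
        have h2 := pos_lt (i := l₀) h (k₀.succAbove q) k₀.val
        omega
      · have hne : l₀.succAbove p ≠ l₀ := Fin.succAbove_ne l₀ p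
        have hgt : l₀ < l₀.succAbove p := lt_of_le_of_ne h (Ne.symm hne)
        rw [if_neg (not_lt.mpr h), if_neg ?_]
        have h2 := pos_ge (p := l₀.succAbove p) hgt (k₀.succAbove q) (le_refl (n+1))
        have h3 : (k₀ : ℕ) ≤ n + 1 := le_of_lt k₀.isLt
        have h4 : (l₀ : ℕ) * (n+1) + (n+1) ≤ (l₀.succAbove p : ℕ) * (n+1) + (k₀.succAbove q : ℕ) := h2
        omega
    have hdet : (D X Y m : Matrix _ _ R).det = (D X Y (m+1)).det + T X Y l₀ k₀ := by
      rw [hupd, Matrix.det_updateRow_add, Matrix.updateRow_eq_self,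
        det_updateRow_single, hBsub, T]
      ring
    rw [hdet, ih (m+1) (by omega)]
    have hsplit : ∀ l k : Fin (n+1),
        (if m ≤ l.val * (n+1) + k.val then T X Y l k else 0)
          = (if l = l₀ then (if k = k₀ then T X Y l k else 0) else 0)
            + (if m + 1 ≤ l.val * (n+1) + k.val then T X Y l k else 0) := by
      intro l k
      rcases eq_or_ne (l.val * (n+1) + k.val) m with h | h
      · obtain ⟨rfl, rfl⟩ := pos_eq_iff.mp (h.trans hpos.symm)
        rw [if_pos (by omega), if_pos rfl, if_pos rfl, if_neg (by omega), add_zero]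
      · have h1 : (if l = l₀ then (if k = k₀ then T X Y l k else 0) else 0) = 0 := by
          rcases eq_or_ne l l₀ with rfl | hl
          · rcases eq_or_ne k k₀ with rfl | hk
            · exact absurd hpos h
            · simp [hk]
          · simp [hl]
        rw [h1, zero_add]
        rcases Nat.lt_or_ge (l.val * (n+1) + k.val) m with h2 | h2
        · rw [if_neg (by omega), if_neg (by omega)]
        · rw [if_pos (by omega), if_pos (by omega)]
    simp only [hsplit, Finset.sum_add_distrib]
    have hdelta : (∑ l : Fin (n+1), ∑ k : Fin (n+1),
        (if l = l₀ then (if k = k₀ then T X Y l k else 0) else 0)) = T X Y l₀ k₀ := by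
      rw [Finset.sum_eq_single l₀]
      · simp only [if_pos rfl]
        rw [Finset.sum_eq_single k₀]
        · simp
        · intro b _ hb; simp [hb]
        · intro h; exact absurd (Finset.mem_univ k₀) h
      · intro b _ hb; simp [hb]
      · intro h; exact absurd (Finset.mem_univ l₀) h
    rw [hdelta]
    ring

end Stmt1Aux

open Stmt1Aux in
/-- Lemma 3.1: let `A` be the matrix whose rows above `i` come from `Y`, whose
row `i` has `Y`-entries in the first `j` columns and `X`-entries afterwards,
and whose rows below `i` come from `X`.  Then
`det A = det Y + ∑_{k ≥ j} (-1)^{i+k} det(B_{ik})(x_{ik}-y_{ik})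
       + ∑_{l > i} ∑_k (-1)^{l+k} det(B_{lk})(x_{lk}-y_{lk})`,
where `B_{lk}` deletes row `l` and column `k`, with rows above `l` from `Y`
and rows below `l` from `X`. -/
theorem stmt_1 {R : Type*} [CommRing R] (n : ℕ)
    (X Y : Matrix (Fin (n + 1)) (Fin (n + 1)) R)
    (i : Fin (n + 1)) (j : ℕ) (hj : j ≤ n + 1)
    (A : Matrix (Fin (n + 1)) (Fin (n + 1)) R)
    (hA : A = Matrix.of fun p q =>
      if p < i then Y p q
      else if p = i then (if q.val < j then Y p q else X p q)
      else X p q)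
    (B : Fin (n + 1) → Fin (n + 1) → Matrix (Fin n) (Fin n) R)
    (hB : ∀ l k, B l k = Matrix.of fun p q =>
      if l.succAbove p < l then Y (l.succAbove p) (k.succAbove q)
      else X (l.succAbove p) (k.succAbove q)) :
    A.det = Y.det
      + (∑ k : Fin (n + 1),
          if j ≤ k.val then
            (-1 : R) ^ (i.val + k.val) * (B i k).det * (X i k - Y i k)
          else 0)
      + ∑ l : Fin (n + 1), ∑ k : Fin (n + 1),
          if i < l then
            (-1 : R) ^ (l.val + k.val) * (B l k).det * (X l k - Y l k)
          else 0 := by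
  have hBB : ∀ l k, B l k = Bmat X Y l k := fun l k => (hB l k).trans rfl
  set m := i.val * (n + 1) + j with hm
  have hAD : A = D X Y m := by
    rw [hA]
    ext p q
    simp only [D, Matrix.of_apply]
    rcases lt_trichotomy p i with h | rfl | h
    · rw [if_pos h, if_pos (pos_lt h q j)]
    · rw [if_neg (lt_irrefl _), if_pos rfl]
      rcases Nat.lt_or_ge q.val j with h2 | h2
      · rw [if_pos h2, if_pos (by omega)]
      · rw [if_neg (by omega), if_neg (by omega)]
    · rw [if_neg (not_lt.mpr (le_of_lt h)), if_neg (Fin.ne_of_gt h),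
        if_neg (not_lt.mpr (pos_ge h q hj))]
  have hmle : m ≤ (n+1) * (n+1) := by
    have h1 : (i.val + 1) * (n+1) ≤ (n+1) * (n+1) := Nat.mul_le_mul_right _ i.isLt
    have h2 : (i.val + 1) * (n+1) = i.val * (n+1) + (n+1) := by ring
    omega
  rw [hAD, key X Y ((n+1) * (n+1) - m) m (by omega)]
  have hsplit : ∀ l k : Fin (n+1),
      (if m ≤ l.val * (n+1) + k.val then T X Y l k else 0)
        = (if l = i then (if j ≤ k.val then T X Y l k else 0) else 0)
          + (if i < l then T X Y l k else 0) := by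
    intro l k
    rcases lt_trichotomy l i with h | rfl | h
    · rw [if_neg (Fin.ne_of_lt h), if_neg (not_lt.mpr (le_of_lt h)),
        if_neg (not_le.mpr (pos_lt h k j)), add_zero]
    · rw [if_pos rfl, if_neg (lt_irrefl _), add_zero]
      rcases Nat.lt_or_ge k.val j with h2 | h2
      · rw [if_neg (by omega), if_neg (by omega)]
      · rw [if_pos (by omega), if_pos (by omega)]
    · rw [if_neg (Fin.ne_of_gt h), if_pos h, zero_add,
        if_pos (pos_ge h k hj)]
  simp only [hsplit, Finset.sum_add_distrib]
  have hdelta : (∑ l : Fin (n+1), ∑ k : Fin (n+1),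
      (if l = i then (if j ≤ k.val then T X Y l k else 0) else 0))
        = ∑ k : Fin (n+1), (if j ≤ k.val then T X Y i k else 0) := by
    rw [Finset.sum_eq_single i]
    · simp
    · intro b _ hb; simp [hb]
    · intro h; exact absurd (Finset.mem_univ i) h
  rw [hdelta]
  have e1 : (∑ k : Fin (n+1), if j ≤ k.val then T X Y i k else 0)
      = ∑ k : Fin (n+1), if j ≤ k.val then
          (-1:R)^(i.val+k.val) * (B i k).det * (X i k - Y i k) else 0 := by
    apply Finset.sum_congr rfl
    intro k _
    simp only [T, hBB]
  have e2 : (∑ l : Fin (n+1), ∑ k : Fin (n+1), if i < l then T X Y l k else 0)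
      = ∑ l : Fin (n+1), ∑ k : Fin (n+1), if i < l then
          (-1:R)^(l.val+k.val) * (B l k).det * (X l k - Y l k) else 0 := by
    apply Finset.sum_congr rfl
    intro l _
    apply Finset.sum_congr rfl
    intro k _
    simp only [T, hBB]
  rw [e1, e2, add_assoc]
end

section
/- Let $R$ be a commutative ring, $X, Y, Z$ be $m \times n$ matrices over $R$, $s_2 \le s_1 \le m$, column indices $a_1 < \dots < a_{s_1+1} \le n$, and $1 \le r \le s_2$. Then the sum $\sum_{u=r}^{s_2} \det(A_u)$, where $A_u$ is the $(s_1+1)\times(s_1+1)$ matrix (columns $a_1,\dots,a_{s_1+1}$) whose rows in order are $X_r, Y_1, \dots, Y_{u-1}, Z_u, X_{u+1}, \dots, X_{s_1}$, lies in the ideal of $R$ generated by the $s_2 \times s_2$ minors of the first $s_2$ rows of $Y$ together with all elements $g_{i_1 j_1, i_2 j_2} = z_{i_1 j_1}(x_{i_2 j_2} - y_{i_2 j_2}) - z_{i_2 j_2}(x_{i_1 j_1} - y_{i_1 j_1})$. -/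
/-!
Modulo the ideal, write `w_i = x_i - y_i`. The Koszul generators say that
`z_i(c) w_j(c') = z_j(c') w_i(c)` entrywise, so in a determinant a pair of rows `(w_i, z_j)` may
be traded for `(z_i, w_j)`, and a pair of rows `(w_i, z_i)` kills it. Splitting the first row
`x_r = y_r + w_r` of `A_u` therefore gives `det A_u = det D_u - det D_{u+1}` for `u > r` and
`det A_r = -det D_{r+1}`, where `D_u` has rows `z_r, y_1, …, y_{u-1}, x_u, …`. The sum telescopes
to `-det D_{s₂+1}`, which vanishes because the rows `y_1, …, y_{s₂}` have vanishing maximal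
minors, so that their wedge product is zero.
-/

open Matrix Finset Equiv

theorem Fintype.prod_eq_mul_mul_prod_compl_pair {n M : Type*} [Fintype n] [DecidableEq n]
    [CommMonoid M] (f : n → M) {p q : n} (hpq : p ≠ q) :
    ∏ i, f i = f p * f q * ∏ i ∈ {p, q}ᶜ, f i := by
  rw [← prod_mul_prod_compl {p, q}, prod_pair hpq]

namespace Matrix

variable {n S : Type*} [Fintype n] [DecidableEq n] [CommRing S]

theorem det_eq_sum_sign_mul_prod (M : Matrix n n S) :
    M.det = ∑ σ : Perm n, (Perm.sign σ : S) * ∏ i, M i (σ i) := by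
  rw [← det_transpose, det_apply']
  rfl

theorem det_eq_of_mul_rows_eq {M N : Matrix n n S} {p q : n} (hpq : p ≠ q)
    (hrows : ∀ i, i ≠ p → i ≠ q → M i = N i)
    (h : ∀ c c', M p c * M q c' = N p c * N q c') : M.det = N.det := by
  simp only [det_eq_sum_sign_mul_prod, Fintype.prod_eq_mul_mul_prod_compl_pair _ hpq, h]
  refine sum_congr rfl fun σ _ => congrArg _ (congrArg _ (prod_congr rfl fun i hi => ?_))
  simp only [mem_compl, mem_insert, mem_singleton, not_or] at hi
  rw [hrows i hi.1 hi.2]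

theorem det_eq_zero_of_mul_rows_comm {M : Matrix n n S} {p q : n} (hpq : p ≠ q)
    (h : ∀ c c', M p c * M q c' = M p c' * M q c) : M.det = 0 := by
  rw [det_eq_sum_sign_mul_prod]
  refine sum_involution (fun σ _ => σ * Equiv.swap p q) (fun σ _ => ?_)
    (fun σ _ _ hσ => ?_) (fun σ _ => mem_univ _) (fun σ _ => by simp [mul_assoc])
  · have hprod : ∏ i, M i ((σ * Equiv.swap p q) i) = ∏ i, M i (σ i) := by
      rw [Fintype.prod_eq_mul_mul_prod_compl_pair _ hpq,
        Fintype.prod_eq_mul_mul_prod_compl_pair _ hpq]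
      simp only [Perm.mul_apply, swap_apply_left, swap_apply_right, h (σ q)]
      refine congrArg _ (prod_congr rfl fun i hi => ?_)
      simp only [mem_compl, mem_insert, mem_singleton, not_or] at hi
      rw [swap_apply_of_ne_of_ne hi.1 hi.2]
    rw [hprod, Perm.sign_mul, Perm.sign_swap hpq]
    simp
  · exact hpq (by simpa [swap_apply_left] using congrArg (· q) hσ)

end Matrix

theorem exteriorPower.ιMulti_eq_zero_of_minors_eq_zero {S ι : Type*} [CommRing S] [Fintype ι]
    [LinearOrder ι] {t : ℕ} (v : Fin t → ι → S)
    (h : ∀ c : Fin t → ι, StrictMono c → (Matrix.of fun i j => v i (c j)).det = 0) :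
    exteriorPower.ιMulti S t v = 0 := by
  refine ((Pi.basisFun S ι).exteriorPower t).repr.injective ?_
  ext s
  rw [exteriorPower.basis_repr_apply, exteriorPower.ιMultiDual_apply_ιMulti]
  simpa using h _ (Set.powersetCard.ofFinEmbEquiv.symm s).strictMono

theorem ExteriorAlgebra.ιMulti_eq_zero_of_comp_castLE {R M : Type*} [CommRing R]
    [AddCommGroup M] [Module R M] {t k : ℕ} (h : t ≤ k) (v : Fin k → M)
    (hv : ExteriorAlgebra.ιMulti R t (v ∘ Fin.castLE h) = 0) :
    ExteriorAlgebra.ιMulti R k v = 0 := by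
  obtain ⟨l, rfl⟩ := Nat.exists_eq_add_of_le h
  rw [← Fin.append_castAdd_natAdd (f := v), ← ExteriorAlgebra.ιMulti_mul_ιMulti]
  exact mul_eq_zero_of_left hv _

theorem Matrix.det_eq_zero_of_ιMulti_eq_zero {S : Type*} [CommRing S] {k : ℕ}
    (A : Matrix (Fin k) (Fin k) S) (h : ExteriorAlgebra.ιMulti S k A = 0) : A.det = 0 := by
  have h' : exteriorPower.ιMulti S k A = 0 := Subtype.ext h
  have := exteriorPower.alternatingMapLinearEquiv_apply_ιMulti
    (detRowAlternating : (Fin k → S) [⋀^Fin k]→ₗ[S] S) A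
  rwa [h', map_zero, eq_comm] at this

namespace KoszulSum

variable {S : Type*} {k : ℕ} (x y z : ℕ → Fin (k + 1) → S) (r : ℕ)

/-- The paper's `A_u`, for row families `x y z` indexed from `1`: position `p ≥ 1` holds a row
with index `p`, position `0` holds `x r`. -/
def matA (u : ℕ) : Matrix (Fin (k + 1)) (Fin (k + 1)) S :=
  of fun p c =>
    if p.val = 0 then x r c else if p.val < u then y p c else if p.val = u then z p c else x p c

def matD (u : ℕ) : Matrix (Fin (k + 1)) (Fin (k + 1)) S :=
  of fun p c => if p.val = 0 then z r c else if p.val < u then y p c else x p c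

variable {x y z r}

theorem matD_apply_self {u : ℕ} (hu : 1 ≤ u) (hk : u < k + 1) :
    matD x y z r u ⟨u, hk⟩ = x u := by
  ext c
  simp only [matD, of_apply]
  rw [if_neg (by omega), if_neg (by omega)]

theorem updateRow_matD_self {u : ℕ} (hu : 1 ≤ u) (hk : u < k + 1) :
    (matD x y z r u).updateRow ⟨u, hk⟩ (y u) = matD x y z r (u + 1) := by
  ext p c
  simp only [updateRow_apply, matD, of_apply, Fin.ext_iff]
  split_ifs <;> first | rfl | omega | simp_all

variable [CommRing S]

theorem det_updateRow_matD_sub {u : ℕ} (hu : 1 ≤ u) (hk : u < k + 1) :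
    ((matD x y z r u).updateRow ⟨u, hk⟩ (x u - y u)).det =
      (matD x y z r u).det - (matD x y z r (u + 1)).det := by
  rw [sub_eq_add_neg, ← neg_one_smul S (y u), det_updateRow_add, det_updateRow_smul,
    ← matD_apply_self (x := x) (y := y) (z := z) (r := r) hu hk, updateRow_eq_self,
    updateRow_matD_self hu hk]
  ring

theorem det_matA_eq_det_updateRow_zero_add (u : ℕ) :
    (matA x y z r u).det = ((matA x y z r u).updateRow 0 (y r)).det +
      ((matA x y z r u).updateRow 0 (x r - y r)).det := by
  rw [← det_updateRow_add, add_sub_cancel]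
  exact congrArg det (updateRow_eq_self _ _).symm

theorem det_matD_eq_zero {t : ℕ} (ht : t ≤ k)
    (hy : ∀ c : Fin t → Fin (k + 1), StrictMono c →
      (of fun i j : Fin t => y (i + 1) (c j)).det = 0) :
    (matD x y z r (t + 1)).det = 0 := by
  refine det_eq_zero_of_ιMulti_eq_zero _ ?_
  refine (ExteriorAlgebra.ιMulti_succ_apply _).trans
    (mul_eq_zero_of_right _ (ExteriorAlgebra.ιMulti_eq_zero_of_comp_castLE ht _ ?_))
  have hrows : vecTail (matD x y z r (t + 1)) ∘ Fin.castLE ht = fun i : Fin t => y (i + 1) := by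
    ext i c
    change matD x y z r (t + 1) (Fin.castLE ht i).succ c = _
    simp only [matD, of_apply, Fin.val_succ, Fin.val_castLE]
    rw [if_neg (by omega), if_pos (by omega)]
  rw [hrows]
  exact congrArg Subtype.val (exteriorPower.ιMulti_eq_zero_of_minors_eq_zero _ hy)

variable (hK : ∀ i j c c', z i c * (x j c' - y j c') = z j c' * (x i c - y i c))
include hK

theorem det_matA_of_lt {u : ℕ} (hr : 1 ≤ r) (hru : r < u) (hk : u < k + 1) :
    (matA x y z r u).det = (matD x y z r u).det - (matD x y z r (u + 1)).det := by
  have h0u : (0 : Fin (k + 1)) ≠ ⟨u, hk⟩ := by simp [Fin.ext_iff]; omega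
  have h0r : (0 : Fin (k + 1)) ≠ ⟨r, by omega⟩ := by simp [Fin.ext_iff]; omega
  have hY : ((matA x y z r u).updateRow 0 (y r)).det = 0 := by
    refine det_zero_of_row_eq h0r ?_
    ext c
    simp only [updateRow_self, updateRow_ne h0r.symm, matA, of_apply]
    rw [if_neg (by omega), if_pos hru]
  have hW : ((matA x y z r u).updateRow 0 (x r - y r)).det =
      ((matD x y z r u).updateRow ⟨u, hk⟩ (x u - y u)).det := by
    refine det_eq_of_mul_rows_eq h0u (fun i hi0 hiu => ?_) (fun c c' => ?_)
    · ext c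
      have hi0' : i.val ≠ 0 := fun h => hi0 (Fin.ext h)
      have hiu' : i.val ≠ u := fun h => hiu (Fin.ext h)
      simp only [updateRow_ne hi0, updateRow_ne hiu, matA, matD, of_apply, if_neg hi0',
        if_neg hiu']
    · rw [updateRow_self, updateRow_self, updateRow_ne h0u, updateRow_ne h0u.symm]
      simp only [matA, matD, of_apply, Fin.val_zero, if_true, lt_irrefl, if_false,
        if_neg (show u ≠ 0 by omega), Pi.sub_apply]
      linear_combination hK u r c' c
  rw [det_matA_eq_det_updateRow_zero_add, hY, hW, zero_add, det_updateRow_matD_sub (by omega) hk]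

theorem det_matA_self (hr : 1 ≤ r) (hk : r < k + 1) :
    (matA x y z r r).det = -(matD x y z r (r + 1)).det := by
  have h0r : (0 : Fin (k + 1)) ≠ ⟨r, hk⟩ := by simp [Fin.ext_iff]; omega
  have hr0 : r ≠ 0 := by omega
  have hW : ((matA x y z r r).updateRow 0 (x r - y r)).det = 0 := by
    refine det_eq_zero_of_mul_rows_comm h0r fun c c' => ?_
    rw [updateRow_self, updateRow_ne h0r.symm]
    simp only [matA, of_apply, if_neg hr0, lt_irrefl, if_false, if_true, Pi.sub_apply]
    linear_combination hK r r c' c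
  have hY : (matA x y z r r).updateRow 0 (y r) =
      (matD x y z r (r + 1)).submatrix (Equiv.swap 0 ⟨r, hk⟩) id := by
    ext p c
    rcases eq_or_ne p 0 with rfl | hp0
    · simp [matD, hr0]
    rcases eq_or_ne p ⟨r, hk⟩ with rfl | hpr
    · simp [matA, matD, hr0]
    have hp0' : p.val ≠ 0 := fun h => hp0 (Fin.ext h)
    have hpr' : p.val ≠ r := fun h => hpr (Fin.ext h)
    simp only [updateRow_ne hp0, submatrix_apply, swap_apply_of_ne_of_ne hp0 hpr, id, matA, matD,
      of_apply, if_neg hp0', if_neg hpr']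
    split_ifs <;> first | rfl | omega
  rw [det_matA_eq_det_updateRow_zero_add, hW, add_zero, hY, det_permute, Perm.sign_swap h0r]
  simp

theorem sum_det_matA (hr : 1 ≤ r) {t : ℕ} (hrt : r ≤ t) (hk : t < k + 1) :
    ∑ u ∈ Icc r t, (matA x y z r u).det = -(matD x y z r (t + 1)).det := by
  induction t, hrt using Nat.le_induction with
  | base => simp [det_matA_self hK hr hk]
  | succ t hrt ih =>
    rw [sum_Icc_succ_top (by omega), ih (by omega), det_matA_of_lt hK hr (by omega) hk]
    ring

omit hK

theorem map_matA {T : Type*} [CommRing T] (f : S →+* T) (u : ℕ) :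
    f.mapMatrix (matA x y z r u) =
      matA (fun i c => f (x i c)) (fun i c => f (y i c)) (fun i c => f (z i c)) r u := by
  ext p c
  simp only [RingHom.mapMatrix_apply, map_apply, matA, of_apply]
  split_ifs <;> rfl

theorem sum_det_matA_mem {I : Ideal S}
    (hK : ∀ i j c c', z i c * (x j c' - y j c') - z j c' * (x i c - y i c) ∈ I)
    {t : ℕ} (hy : ∀ c : Fin t → Fin (k + 1), StrictMono c →
      (of fun i j : Fin t => y (i + 1) (c j)).det ∈ I)
    (hr : 1 ≤ r) (hrt : r ≤ t) (hk : t < k + 1) :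
    ∑ u ∈ Icc r t, (matA x y z r u).det ∈ I := by
  rw [← Ideal.Quotient.eq_zero_iff_mem, map_sum]
  simp only [RingHom.map_det, map_matA]
  rw [sum_det_matA _ hr hrt hk, det_matD_eq_zero (by omega), neg_zero]
  · intro c hc
    have := Ideal.Quotient.eq_zero_iff_mem.mpr (hy c hc)
    rwa [RingHom.map_det] at this
  · intro i j c c'
    have := Ideal.Quotient.eq_zero_iff_mem.mpr (hK i j c c')
    simpa [sub_eq_zero] using this

end KoszulSum

/-- Lemma 4.5: the sum `∑_{u=r}^{s₂} det(A_u)`, where `A_u` has rows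
`X_r, Y_1, …, Y_{u-1}, Z_u, X_{u+1}, …, X_{s₁}` on columns `a₁,…,a_{s₁+1}`,
lies in the ideal generated by the `s₂×s₂` minors of the first `s₂` rows of
`Y` together with all Koszul relations `g_{i₁j₁,i₂j₂}`. -/
theorem stmt_7 {R : Type*} [CommRing R] (m n s₁ s₂ r : ℕ)
    (hs₂ : s₂ ≤ s₁) (hm : s₁ ≤ m) (hr1 : 1 ≤ r) (hrs : r ≤ s₂)
    (X Y Z : Matrix (Fin m) (Fin n) R)
    (a : Fin (s₁ + 1) → Fin n) (ha : StrictMono a) :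
    (∑ u ∈ Finset.Icc r s₂,
      (Matrix.of fun p q : Fin (s₁ + 1) =>
        if p.val = 0 then X ⟨r - 1, by omega⟩ (a q)
        else if p.val < u then Y ⟨p.val - 1, by omega⟩ (a q)
        else if p.val = u then Z ⟨p.val - 1, by omega⟩ (a q)
        else X ⟨p.val - 1, by omega⟩ (a q)).det)
    ∈ Ideal.span
        ({ w : R | ∃ c : Fin s₂ → Fin n, StrictMono c ∧
            w = (Matrix.of fun i j : Fin s₂ =>
              Y (Fin.castLE (le_trans hs₂ hm) i) (c j)).det } ∪
         { w : R | ∃ (i₁ i₂ : Fin m) (j₁ j₂ : Fin n),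
            w = Z i₁ j₁ * (X i₂ j₂ - Y i₂ j₂) - Z i₂ j₂ * (X i₁ j₁ - Y i₁ j₁) }) := by
  -- `% m` only makes `row` total; it is the identity on the indices `1 ≤ i ≤ m` that occur.
  let row (i : ℕ) : Fin m := ⟨(i - 1) % m, Nat.mod_lt _ (by omega)⟩
  have hrow {i : ℕ} (hi : i - 1 < m) : row i = ⟨i - 1, hi⟩ := Fin.ext (Nat.mod_eq_of_lt hi)
  let rows (M : Matrix (Fin m) (Fin n) R) (i : ℕ) (q : Fin (s₁ + 1)) : R := M (row i) (a q)
  have hA : ∀ u, (Matrix.of fun p q : Fin (s₁ + 1) =>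
        if p.val = 0 then X ⟨r - 1, by omega⟩ (a q)
        else if p.val < u then Y ⟨p.val - 1, by omega⟩ (a q)
        else if p.val = u then Z ⟨p.val - 1, by omega⟩ (a q)
        else X ⟨p.val - 1, by omega⟩ (a q)) =
      KoszulSum.matA (rows X) (rows Y) (rows Z) r u := by
    intro u
    ext p q
    simp only [KoszulSum.matA, of_apply, rows, hrow (show r - 1 < m by omega),
      hrow (show p.val - 1 < m by omega)]
  simp only [hA]
  refine KoszulSum.sum_det_matA_mem (fun i j c c' => ?_) (fun c hc => ?_) hr1 hrs (by omega)
  · exact Ideal.subset_span (Or.inr ⟨row i, row j, a c, a c', rfl⟩)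
  · refine Ideal.subset_span (Or.inl ⟨a ∘ c, ha.comp hc, ?_⟩)
    congr 2
    ext i j
    simp only [rows, Function.comp_apply, hrow (show i.val + 1 - 1 < m by omega)]
    rfl
end

section
/- Let $R$ be a commutative ring and let $x_{ia}, y_{ia}, z_{ia} \in R$ for $i \in \{1,2,3\}$, $a \in \{1,2,3\}$. Substituting $z_{ia} = x_{ia} - y_{ia}$ into the polynomial $f = \det\begin{pmatrix} z_{11} & z_{12} & z_{13} \\ x_{21} & x_{22} & x_{23} \\ x_{31} & x_{32} & x_{33} \end{pmatrix} + \det\begin{pmatrix} y_{11} & y_{12} & y_{13} \\ z_{21} & z_{22} & z_{23} \\ x_{31} & x_{32} & x_{33} \end{pmatrix}$, the resulting element lies in the ideal of $R$ generated by $\det(X)$ (the determinant of the matrix $(x_{ia})$) and the $2 \times 2$ minors of the matrix $(y_{ia})$ with rows $1,2$. -/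
/-!
Since the determinant is additive in each row, substituting `z = x - y` makes `f` telescope:
`f = det (x₁; x₂; x₃) - det (y₁; x₂; x₃) + det (y₁; x₂; x₃) - det (y₁; y₂; x₃)
   = det X - det (y₁; y₂; x₃)`,
and the Laplace expansion of `det (y₁; y₂; x₃)` along its last row writes it as a combination
of the `2 × 2` minors of the first two rows of `Y`.
-/

namespace Matrix

variable {n R : Type*} [Fintype n] [DecidableEq n] [CommRing R]

theorem det_updateRow_sub (M : Matrix n n R) (i : n) (u v : n → R) :
    (M.updateRow i (u - v)).det = (M.updateRow i u).det - (M.updateRow i v).det := by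
  rw [eq_sub_iff_add_eq, ← det_updateRow_add, sub_add_cancel]

theorem det_updateRow_sub_add_det_updateRow_sub (X Y : Matrix n n R) {i j : n} (hij : i ≠ j) :
    (X.updateRow i (X i - Y i)).det + ((X.updateRow i (Y i)).updateRow j (X j - Y j)).det =
      X.det - ((X.updateRow i (Y i)).updateRow j (Y j)).det := by
  have hXj : X.updateRow i (Y i) j = X j := updateRow_ne hij.symm
  rw [det_updateRow_sub, det_updateRow_sub, updateRow_eq_self, ← hXj, updateRow_eq_self]
  ring

theorem det_mem_span_det_submatrix_castSucc {m : ℕ} (M : Matrix (Fin (m + 1)) (Fin (m + 1)) R) :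
    M.det ∈ Ideal.span (Set.range fun j : Fin (m + 1) ↦
      (M.submatrix Fin.castSucc j.succAbove).det) := by
  rw [det_succ_row M (Fin.last m), Fin.succAbove_last]
  exact Ideal.sum_mem _ fun j _ ↦ Ideal.mul_mem_left _ _ (Ideal.subset_span ⟨j, rfl⟩)

end Matrix

/-- The special case `m = n = 3`, `s₁ = 3`, `s₂ = 2`: substituting
`z_{ia} = x_{ia} - y_{ia}` into
`f = det(z₁;x₂;x₃) + det(y₁;z₂;x₃)` yields an element of the ideal
generated by `det X` and the 2×2 minors of the first two rows of `Y`. -/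
theorem stmt_10 {R : Type*} [CommRing R] (x y : Fin 3 → Fin 3 → R) :
    (Matrix.of ![![x 0 0 - y 0 0, x 0 1 - y 0 1, x 0 2 - y 0 2],
                 ![x 1 0, x 1 1, x 1 2],
                 ![x 2 0, x 2 1, x 2 2]]).det
    + (Matrix.of ![![y 0 0, y 0 1, y 0 2],
                   ![x 1 0 - y 1 0, x 1 1 - y 1 1, x 1 2 - y 1 2],
                   ![x 2 0, x 2 1, x 2 2]]).det
    ∈ Ideal.span ({(Matrix.of x).det,
        y 0 0 * y 1 1 - y 0 1 * y 1 0,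
        y 0 0 * y 1 2 - y 0 2 * y 1 0,
        y 0 1 * y 1 2 - y 0 2 * y 1 1} : Set R) := by
  set X : Matrix (Fin 3) (Fin 3) R := Matrix.of x
  set W := (X.updateRow 0 (y 0)).updateRow 1 (y 1)
  have htelescope :=
    Matrix.det_updateRow_sub_add_det_updateRow_sub X (Matrix.of y) (i := 0) (j := 1) (by decide)
  have hZ₁ : X.updateRow 0 (X 0 - Matrix.of y 0) = Matrix.of ![![x 0 0 - y 0 0, x 0 1 - y 0 1,
      x 0 2 - y 0 2], ![x 1 0, x 1 1, x 1 2], ![x 2 0, x 2 1, x 2 2]] := by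
    ext i j; fin_cases i <;> fin_cases j <;> rfl
  have hZ₂ : (X.updateRow 0 (Matrix.of y 0)).updateRow 1 (X 1 - Matrix.of y 1) =
      Matrix.of ![![y 0 0, y 0 1, y 0 2], ![x 1 0 - y 1 0, x 1 1 - y 1 1, x 1 2 - y 1 2],
        ![x 2 0, x 2 1, x 2 2]] := by
    ext i j; fin_cases i <;> fin_cases j <;> rfl
  rw [← hZ₁, ← hZ₂, htelescope]
  refine Ideal.sub_mem _ (Ideal.subset_span (by simp)) (Ideal.span_mono ?_
    (Matrix.det_mem_span_det_submatrix_castSucc W))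
  rintro _ ⟨j, rfl⟩
  fin_cases j <;> simp [W, Matrix.det_fin_two, Matrix.updateRow_apply, Fin.succAbove, Fin.lt_def]
end

section
/- Let $k$ be a field and $X, Y$ be $3 \times 3$ matrices of variables. Let $S = k[X,Y]/(I_3(X), I_2(Y))$ where $I_3(X)$ is generated by $\det(X)$ and $I_2(Y)$ by all $2\times 2$ minors of $Y$, and let $\mathbb{D} = (\{x_{ij} - y_{ij}\})S$ be the diagonal ideal. Then the element $h = \det\begin{pmatrix} z_{11} & z_{12} & z_{13} \\ z_{21} & z_{22} & z_{23} \\ y_{31} & y_{32} & y_{33} \end{pmatrix} + \det\begin{pmatrix} z_{11} & z_{12} & z_{13} \\ y_{21} & y_{22} & y_{23} \\ z_{31} & z_{32} & z_{33} \end{pmatrix} + \det\begin{pmatrix} x_{11} & x_{12} & x_{13} \\ z_{21} & z_{22} & z_{23} \\ z_{31} & z_{32} & z_{33} \end{pmatrix}$, when each $z_{ij}$ is replaced by $(x_{ij}-y_{ij})t$ in $S[t]$, has image in $\mathbb{D}^2 t^2 \subseteq S[t]$; equivalently, substituting $z_{ij} = x_{ij}-y_{ij}$ into $h$ yields an element of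 $(\det(X), I_2(Y))$ in $k[X,Y]$. -/
open MvPolynomial

/-- Example 2.2: with `X`, `Y` generic 3×3 matrices, the quadratic equation `h`
of the Rees algebra of the diagonal ideal of `k[X,Y]/(I₃(X), I₂(Y))`
specializes, under `z_{ij} ↦ x_{ij}-y_{ij}`, to an element of
`(det X) + I₂(Y)` in `k[X,Y]`. -/
theorem stmt_11 {k : Type*} [Field k]
    (xv yv : Fin 3 → Fin 3 → MvPolynomial ((Fin 3 × Fin 3) ⊕ (Fin 3 × Fin 3)) k)
    (hx : ∀ i j, xv i j = X (Sum.inl (i, j)))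
    (hy : ∀ i j, yv i j = X (Sum.inr (i, j)))
    (z : Fin 3 → Fin 3 → MvPolynomial ((Fin 3 × Fin 3) ⊕ (Fin 3 × Fin 3)) k)
    (hz : ∀ i j, z i j = xv i j - yv i j) :
    (Matrix.of ![![z 0 0, z 0 1, z 0 2],
                 ![z 1 0, z 1 1, z 1 2],
                 ![yv 2 0, yv 2 1, yv 2 2]]).det
    + (Matrix.of ![![z 0 0, z 0 1, z 0 2],
                   ![yv 1 0, yv 1 1, yv 1 2],
                   ![z 2 0, z 2 1, z 2 2]]).det
    + (Matrix.of ![![xv 0 0, xv 0 1, xv 0 2],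
                   ![z 1 0, z 1 1, z 1 2],
                   ![z 2 0, z 2 1, z 2 2]]).det
    ∈ Ideal.span ({(Matrix.of xv).det} ∪
        { p | ∃ i₁ i₂ j₁ j₂ : Fin 3, i₁ < i₂ ∧ j₁ < j₂ ∧
            p = yv i₁ j₁ * yv i₂ j₂ - yv i₁ j₂ * yv i₂ j₁ }) := by
  set I := Ideal.span ({(Matrix.of xv).det} ∪
        { p | ∃ i₁ i₂ j₁ j₂ : Fin 3, i₁ < i₂ ∧ j₁ < j₂ ∧
            p = yv i₁ j₁ * yv i₂ j₂ - yv i₁ j₂ * yv i₂ j₁ }) with hI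
  have hdet : (Matrix.of xv).det ∈ I := by
    apply Ideal.subset_span; left; rfl
  have hmin : ∀ i₁ i₂ j₁ j₂ : Fin 3, i₁ < i₂ → j₁ < j₂ →
      yv i₁ j₁ * yv i₂ j₂ - yv i₁ j₂ * yv i₂ j₁ ∈ I := by
    intro i₁ i₂ j₁ j₂ h1 h2
    apply Ideal.subset_span; right; exact ⟨i₁, i₂, j₁, j₂, h1, h2, rfl⟩
  -- abbreviations for the six 2×2 minors of each row pair
  have m12_01 := hmin 0 1 0 1 (by decide) (by decide)
  have m12_02 := hmin 0 1 0 2 (by decide) (by decide)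
  have m12_12 := hmin 0 1 1 2 (by decide) (by decide)
  have m13_01 := hmin 0 2 0 1 (by decide) (by decide)
  have m13_02 := hmin 0 2 0 2 (by decide) (by decide)
  have m13_12 := hmin 0 2 1 2 (by decide) (by decide)
  have m23_01 := hmin 1 2 0 1 (by decide) (by decide)
  have m23_02 := hmin 1 2 0 2 (by decide) (by decide)
  have m23_12 := hmin 1 2 1 2 (by decide) (by decide)
  have key : (Matrix.of ![![z 0 0, z 0 1, z 0 2],
                 ![z 1 0, z 1 1, z 1 2],
                 ![yv 2 0, yv 2 1, yv 2 2]]).det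
    + (Matrix.of ![![z 0 0, z 0 1, z 0 2],
                   ![yv 1 0, yv 1 1, yv 1 2],
                   ![z 2 0, z 2 1, z 2 2]]).det
    + (Matrix.of ![![xv 0 0, xv 0 1, xv 0 2],
                   ![z 1 0, z 1 1, z 1 2],
                   ![z 2 0, z 2 1, z 2 2]]).det
    = (Matrix.of xv).det
      + (-(xv 0 0) + 2 * yv 0 0) * (yv 1 1 * yv 2 2 - yv 1 2 * yv 2 1)
      + (xv 0 1 - 2 * yv 0 1) * (yv 1 0 * yv 2 2 - yv 1 2 * yv 2 0)
      + (-(xv 0 2) + 2 * yv 0 2) * (yv 1 0 * yv 2 1 - yv 1 1 * yv 2 0)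
      + (xv 1 0) * (yv 0 1 * yv 2 2 - yv 0 2 * yv 2 1)
      + (-(xv 1 1)) * (yv 0 0 * yv 2 2 - yv 0 2 * yv 2 0)
      + (xv 1 2) * (yv 0 0 * yv 2 1 - yv 0 1 * yv 2 0)
      + (-(xv 2 0)) * (yv 0 1 * yv 1 2 - yv 0 2 * yv 1 1)
      + (xv 2 1) * (yv 0 0 * yv 1 2 - yv 0 2 * yv 1 0)
      + (-(xv 2 2)) * (yv 0 0 * yv 1 1 - yv 0 1 * yv 1 0) := by
    simp only [Matrix.det_fin_three, Matrix.of_apply, Matrix.cons_val', Matrix.cons_val_zero,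
      Matrix.cons_val_one, Matrix.head_cons, Matrix.empty_val', Matrix.cons_val_fin_one,
      Matrix.head_fin_const, Matrix.cons_val_two, Matrix.tail_cons, hz]
    ring
  rw [key]
  exact add_mem (add_mem (add_mem (add_mem (add_mem (add_mem (add_mem (add_mem (add_mem
    hdet (Ideal.mul_mem_left _ _ m23_12)) (Ideal.mul_mem_left _ _ m23_02))
    (Ideal.mul_mem_left _ _ m23_01)) (Ideal.mul_mem_left _ _ m13_12))
    (Ideal.mul_mem_left _ _ m13_02)) (Ideal.mul_mem_left _ _ m13_01))
    (Ideal.mul_mem_left _ _ m12_12)) (Ideal.mul_mem_left _ _ m12_02))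
    (Ideal.mul_mem_left _ _ m12_01)
end
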